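/- Let N ≥ 3, let B₁ be the open unit ball of ℝ^N, let λ < 0 and set δ := (N² − 2N − 2λ + √(N(N−2)(N(N−2) − 4λ)))/(−2λ). Then δ > 1 and the function u(x) := ((δ − 1)/(δ − |x|²))^{(N−2)/2} − 1 is twice continuously differentiable on a neighborhood of the closed unit ball, satisfies −1 < u(x) < 0 and −Δu(x) = λ (u(x) + 1)^{(N+2)/(N−2)} for every x ∈ B₁, and u(x) = 0 for every x with |x| = 1. -/

import Mathlib

/-!
With `q = (N - 2) / 2` and `h s = ((δ - 1) / (δ - s)) ^ q` we have `u x + 1 = h ‖x‖²`,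
`h' = q h / (δ - s)` and `h'' = q (q + 1) h / (δ - s)²`. For a radial function,
`Δ (g ‖x‖²) = 2 N g'(‖x‖²) + 4 ‖x‖² g''(‖x‖²)`, and since `2 (q + 1) = N` this gives
`-Δ u = -N (N - 2) δ h / (δ - ‖x‖²)²`. On the other side
`(u + 1) ^ ((N + 2) / (N - 2)) = h ^ (1 + 2 / q) = (δ - 1)² h / (δ - ‖x‖²)²`, so the equation
reduces to `λ (δ - 1)² + N (N - 2) δ = 0`, of which `δ` is the larger root.
-/

open Set MeasureTheory Filter Topology

/-- The Laplacian of `u` at `x`: the trace of the Hessian of `u`. -/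
noncomputable def laplacian {N : ℕ} (u : EuclideanSpace ℝ (Fin N) → ℝ)
    (x : EuclideanSpace ℝ (Fin N)) : ℝ :=
  ∑ i : Fin N, iteratedFDeriv ℝ 2 u x ![EuclideanSpace.single i 1, EuclideanSpace.single i 1]

/-- A classical solution of the problem `(P_f^λ)` on `Ω`:
`u` is continuous on the closure of `Ω`, twice continuously differentiable on `Ω`,
satisfies `-Δ u = λ f(u)` in `Ω` and `u = 0` on `∂ Ω`. -/
def IsClassicalSolution {N : ℕ} (Ω : Set (EuclideanSpace ℝ (Fin N))) (lam : ℝ)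
    (f : ℝ → ℝ) (u : EuclideanSpace ℝ (Fin N) → ℝ) : Prop :=
  ContinuousOn u (closure Ω) ∧ ContDiffOn ℝ 2 u Ω ∧
    (∀ x ∈ Ω, -laplacian u x = lam * f (u x)) ∧
    (∀ x ∈ frontier Ω, u x = 0)

/-- Condition (1.2): `f` is continuous, non-decreasing, non-negative and `f 0 > 0`. -/
def Cond12 (f : ℝ → ℝ) : Prop :=
  Continuous f ∧ Monotone f ∧ (∀ t, 0 ≤ f t) ∧ 0 < f 0

open scoped Laplacian

theorem laplacian_eq_laplacian {N : ℕ} (u : EuclideanSpace ℝ (Fin N) → ℝ)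
    (x : EuclideanSpace ℝ (Fin N)) : laplacian u x = Δ u x := by
  simp [laplacian, InnerProductSpace.laplacian_eq_iteratedFDeriv_orthonormalBasis u
    (EuclideanSpace.basisFun (Fin N) ℝ)]

section Radial

variable {E : Type*} [NormedAddCommGroup E] [InnerProductSpace ℝ E] [FiniteDimensional ℝ E]

theorem laplacian_sub_const (f : E → ℝ) (c : ℝ) : Δ (fun z => f z - c) = Δ f := by
  have hf : fderiv ℝ (fun z => f z - c) = fderiv ℝ f := funext fun _ => fderiv_sub_const c
  simp only [InnerProductSpace.laplacian_eq_iteratedFDeriv_stdOrthonormalBasis,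
    iteratedFDeriv_two_apply, hf]

theorem laplacian_comp_norm_sq {g g' : ℝ → ℝ} {g'' : ℝ} {x : E}
    (hg : ∀ᶠ s in 𝓝 (‖x‖ ^ 2), HasDerivAt g (g' s) s) (hg' : HasDerivAt g' g'' (‖x‖ ^ 2)) :
    Δ (fun z : E => g (‖z‖ ^ 2)) x =
      2 * Module.finrank ℝ E * g' (‖x‖ ^ 2) + 4 * ‖x‖ ^ 2 * g'' := by
  have hfderiv : fderiv ℝ (fun z => g (‖z‖ ^ 2)) =ᶠ[𝓝 x]
      fun y => g' (‖y‖ ^ 2) • (2 • innerSL ℝ y) := by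
    filter_upwards [((continuous_norm.pow 2).tendsto x).eventually hg] with y hy
    exact (hy.comp_hasFDerivAt y (hasStrictFDerivAt_norm_sq y).hasFDerivAt).fderiv
  have hsecond : HasFDerivAt (fderiv ℝ (fun z => g (‖z‖ ^ 2)))
      (g' (‖x‖ ^ 2) • (2 • innerSL ℝ) +
        (g'' • 2 • innerSL ℝ x).smulRight (2 • innerSL ℝ x)) x := by
    refine HasFDerivAt.congr_of_eventuallyEq ?_ hfderiv
    exact (hg'.comp_hasFDerivAt x (hasStrictFDerivAt_norm_sq x).hasFDerivAt).smul
      (2 • innerSL ℝ : E →L[ℝ] E →L[ℝ] ℝ).hasFDerivAt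
  have hterm (v : E) : fderiv ℝ (fderiv ℝ (fun z : E => g (‖z‖ ^ 2))) x v v =
      2 * g' (‖x‖ ^ 2) * ‖v‖ ^ 2 + 4 * g'' * inner ℝ x v ^ 2 := by
    simp only [hsecond.fderiv, add_apply, smul_apply,
      ContinuousLinearMap.smulRight_apply, coe_innerSL_apply, nsmul_eq_mul, Nat.cast_ofNat,
      smul_eq_mul]
    rw [innerSL_apply_apply, real_inner_self_eq_norm_sq]
    ring
  let b := stdOrthonormalBasis ℝ E
  simp only [InnerProductSpace.laplacian_eq_iteratedFDeriv_orthonormalBasis _ b,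
    iteratedFDeriv_two_apply, Matrix.cons_val_zero, Matrix.cons_val_one, hterm, b.norm_eq_one,
    Finset.sum_add_distrib, ← Finset.mul_sum, b.sum_sq_inner_left, one_pow, mul_one,
    Finset.sum_const, Finset.card_univ, Fintype.card_fin, nsmul_eq_mul]
  ring

end Radial

section Bubble

variable {a b q s : ℝ}

theorem hasDerivAt_div_const_sub_rpow (hb : 0 < b) (hs : s < a) :
    HasDerivAt (fun t => (b / (a - t)) ^ q) (q * (b / (a - s)) ^ q / (a - s)) s := by
  have hpos : 0 < a - s := sub_pos.mpr hs
  have hquot : HasDerivAt (fun t => b / (a - t)) (b / (a - s) ^ 2) s := by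
    refine ((hasDerivAt_const s b).fun_div ((hasDerivAt_id' s).const_sub a)
      hpos.ne').congr_deriv ?_
    ring
  refine (hquot.rpow_const (p := q) (Or.inl (div_pos hb hpos).ne')).congr_deriv ?_
  rw [Real.rpow_sub_one (div_pos hb hpos).ne']
  field_simp

theorem hasDerivAt_mul_div_const_sub_rpow_div (hb : 0 < b) (hs : s < a) :
    HasDerivAt (fun t => q * (b / (a - t)) ^ q / (a - t))
      (q * (q + 1) * (b / (a - s)) ^ q / (a - s) ^ 2) s := by
  have hpos : 0 < a - s := sub_pos.mpr hs
  refine (((hasDerivAt_div_const_sub_rpow (q := q) hb hs).const_mul q).fun_div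
    ((hasDerivAt_id' s).const_sub a) hpos.ne').congr_deriv ?_
  field_simp
  ring

theorem rpow_div_const_sub_mem_Ioo (ha : 1 < a) (hs : s < 1) (hq : 0 < q) :
    ((a - 1) / (a - s)) ^ q ∈ Ioo 0 1 := by
  have hpos : 0 < (a - 1) / (a - s) := div_pos (by linarith) (by linarith)
  exact ⟨Real.rpow_pos_of_pos hpos q,
    Real.rpow_lt_one hpos.le ((div_lt_one (by linarith)).mpr (by linarith)) hq⟩

variable {E : Type*} [NormedAddCommGroup E] [InnerProductSpace ℝ E]

theorem contDiffAt_div_const_sub_norm_sq_rpow {n : WithTop ℕ∞} (hb : 0 < b) {x : E}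
    (hx : ‖x‖ ^ 2 < a) : ContDiffAt ℝ n (fun z : E => (b / (a - ‖z‖ ^ 2)) ^ q) x := by
  have hpos : 0 < a - ‖x‖ ^ 2 := sub_pos.mpr hx
  have hquot : ContDiffAt ℝ n (fun z : E => b / (a - ‖z‖ ^ 2)) x :=
    contDiffAt_const.div (contDiffAt_const.sub (contDiff_norm_sq ℝ).contDiffAt) hpos.ne'
  exact (Real.contDiffAt_rpow_const_of_ne (div_pos hb hpos).ne').comp x hquot

variable [FiniteDimensional ℝ E]

theorem laplacian_div_const_sub_norm_sq_rpow (hb : 0 < b) {x : E} (hx : ‖x‖ ^ 2 < a) :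
    Δ (fun z : E => (b / (a - ‖z‖ ^ 2)) ^ q) x =
      2 * q * (b / (a - ‖x‖ ^ 2)) ^ q *
        (Module.finrank ℝ E * (a - ‖x‖ ^ 2) + 2 * (q + 1) * ‖x‖ ^ 2) / (a - ‖x‖ ^ 2) ^ 2 := by
  have hpos : 0 < a - ‖x‖ ^ 2 := sub_pos.mpr hx
  have hg : ∀ᶠ s in 𝓝 (‖x‖ ^ 2),
      HasDerivAt (fun t => (b / (a - t)) ^ q) (q * (b / (a - s)) ^ q / (a - s)) s := by
    filter_upwards [isOpen_Iio.mem_nhds hx] with s hs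
    exact hasDerivAt_div_const_sub_rpow hb hs
  refine (laplacian_comp_norm_sq hg (hasDerivAt_mul_div_const_sub_rpow_div hb hx)).trans ?_
  field_simp
  ring

end Bubble

theorem neg_laplacian_bubble {N : ℕ} {lam a : ℝ} (hN : (N : ℝ) ≠ 2) (ha : 1 < a)
    (hquad : lam * (a - 1) ^ 2 + N * (N - 2) * a = 0) {x : EuclideanSpace ℝ (Fin N)}
    (hx : ‖x‖ ^ 2 < a) :
    -laplacian (fun z => ((a - 1) / (a - ‖z‖ ^ 2)) ^ (((N : ℝ) - 2) / 2) - 1) x =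
      lam * (((a - 1) / (a - ‖x‖ ^ 2)) ^ (((N : ℝ) - 2) / 2)) ^
        (((N : ℝ) + 2) / ((N : ℝ) - 2)) := by
  have hpos : 0 < a - ‖x‖ ^ 2 := sub_pos.mpr hx
  have hr : 0 < (a - 1) / (a - ‖x‖ ^ 2) := div_pos (sub_pos.mpr ha) hpos
  have hN2 : (N : ℝ) - 2 ≠ 0 := sub_ne_zero.mpr hN
  have hexp : ((N : ℝ) - 2) / 2 * (((N : ℝ) + 2) / ((N : ℝ) - 2)) = ((N : ℝ) - 2) / 2 + 2 := by
    field_simp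
    ring
  rw [laplacian_eq_laplacian, laplacian_sub_const,
    laplacian_div_const_sub_norm_sq_rpow (sub_pos.mpr ha) hx,
    finrank_euclideanSpace_fin, ← Real.rpow_mul hr.le, hexp, Real.rpow_add hr, Real.rpow_two]
  field_simp
  linear_combination -hquad

theorem one_lt_and_quadratic_of_eq {m lam δ : ℝ} (hm : 0 < m) (hlam : lam < 0)
    (hδ : δ = (m - 2 * lam + √(m * (m - 4 * lam))) / (-2 * lam)) :
    1 < δ ∧ lam * (δ - 1) ^ 2 + m * δ = 0 := by
  have hdisc : 0 ≤ m * (m - 4 * lam) := by nlinarith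
  have hsqrt := Real.sq_sqrt hdisc
  have hroot : √(m * (m - 4 * lam)) = -2 * lam * (δ - 1) - m := by
    rw [hδ]
    field_simp [hlam.ne]
    ring
  constructor
  · nlinarith [Real.sqrt_nonneg (m * (m - 4 * lam))]
  · rw [hroot] at hsqrt
    have : 4 * lam * (lam * (δ - 1) ^ 2 + m * δ) = 0 := by linear_combination hsqrt
    simpa [hlam.ne] using this

/-- Example 3.6(i): the explicit solution of `-Δu = λ (u+1)^{(N+2)/(N-2)}` in the unit
ball of `ℝ^N`, `N ≥ 3`, with `-1 < u < 0` in `B₁` and `u = 0` on the unit sphere. -/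
theorem stmt_18 {N : ℕ} (hN : 3 ≤ N) (lam : ℝ) (hlam : lam < 0) (δ : ℝ)
    (hδ : δ = ((N:ℝ)^2 - 2*(N:ℝ) - 2*lam +
      Real.sqrt ((N:ℝ)*((N:ℝ)-2)*((N:ℝ)*((N:ℝ)-2) - 4*lam))) / (-2*lam))
    (u : EuclideanSpace ℝ (Fin N) → ℝ)
    (hu : ∀ x, u x = ((δ - 1)/(δ - ‖x‖^2)) ^ (((N:ℝ)-2)/2) - 1) :
    1 < δ ∧
    (∃ U, IsOpen U ∧ Metric.closedBall (0 : EuclideanSpace ℝ (Fin N)) 1 ⊆ U ∧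
      ContDiffOn ℝ 2 u U) ∧
    (∀ x ∈ Metric.ball (0 : EuclideanSpace ℝ (Fin N)) 1,
      (-1 < u x ∧ u x < 0) ∧
        -laplacian u x = lam * (u x + 1) ^ (((N:ℝ)+2)/((N:ℝ)-2))) ∧
    (∀ x : EuclideanSpace ℝ (Fin N), ‖x‖ = 1 → u x = 0) := by
  have hNR : (3 : ℝ) ≤ N := by exact_mod_cast hN
  obtain ⟨hδ1, hquad⟩ := one_lt_and_quadratic_of_eq (m := N * (N - 2)) (by nlinarith) hlam
    (hδ.trans (by ring))
  obtain rfl : u = fun z => ((δ - 1) / (δ - ‖z‖ ^ 2)) ^ (((N : ℝ) - 2) / 2) - 1 := funext hu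
  have hball {x : EuclideanSpace ℝ (Fin N)} (hx : ‖x‖ ≤ 1) : ‖x‖ ^ 2 < δ :=
    (pow_le_one₀ (norm_nonneg x) hx).trans_lt hδ1
  refine ⟨hδ1, ⟨{z | ‖z‖ ^ 2 < δ}, isOpen_lt (by fun_prop) continuous_const,
    fun x hx => hball (mem_closedBall_zero_iff.mp hx), fun x hx =>
      ((contDiffAt_div_const_sub_norm_sq_rpow (by linarith) hx).sub
        contDiffAt_const).contDiffWithinAt⟩, fun x hx => ⟨?_, ?_⟩, fun x hx => ?_⟩
  · obtain ⟨hpos, hlt⟩ := rpow_div_const_sub_mem_Ioo (q := ((N : ℝ) - 2) / 2) hδ1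
      (pow_lt_one₀ (norm_nonneg x) (mem_ball_zero_iff.mp hx) two_ne_zero) (by linarith)
    dsimp only
    constructor <;> linarith
  · simpa using neg_laplacian_bubble (by linarith) hδ1 hquad (hball (mem_ball_zero_iff.mp hx).le)
  · simp [hx, (by linarith : δ - 1 ≠ 0)]
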